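/- arXiv:2208.11093 — 2 statements merged into one kernel-verified Lean document; each statement's English description precedes it below -/
import Mathlib

section
/- For p, k > 0, the p-k Nielsen beta function ₚβₖ(x) = (p/k) ∫₀^∞ e^{-xt/k}/(1 + e^{-t}) dt is completely monotonic on (0, ∞): for every n ≥ 0 and x > 0, (−1)ⁿ ₚβₖ⁽ⁿ⁾(x) ≥ 0. -/
/-!
ₚβₖ(x) is `p / k` times `∫₀^∞ e^{-xt/k} w(t) dt` for the bounded positive weight
`w(t) = 1 / (1 + e^{-t})`. Near `x > 0` the `x`-derivative of the integrand is dominated by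
`tⁿ e^{-xt/(2k)}`, so one may differentiate under the integral sign; each derivative brings down a
factor `-t/k`, whence `(-1)ⁿ ₚβₖ⁽ⁿ⁾(x) = (p / kⁿ⁺¹) ∫₀^∞ tⁿ e^{-xt/k} w(t) dt ≥ 0`.
-/

open MeasureTheory Real

noncomputable def pkBeta (p k x : ℝ) : ℝ :=
  (p / k) * ∫ t in Set.Ioi (0:ℝ), Real.exp (-(x * t) / k) / (1 + Real.exp (-t))

open Set Metric

theorem integrableOn_pow_mul_exp_neg_mul (n : ℕ) {b : ℝ} (hb : 0 < b) :
    IntegrableOn (fun t : ℝ => t ^ n * exp (-b * t)) (Ioi 0) := by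
  refine (integrableOn_rpow_mul_exp_neg_mul_rpow (s := n) (by linarith [n.cast_nonneg (α := ℝ)])
    one_pos hb).congr_fun (fun t _ => ?_) measurableSet_Ioi
  simp only [rpow_one, rpow_natCast]

noncomputable def laplaceMoment (w : ℝ → ℝ) (k : ℝ) (n : ℕ) (x : ℝ) : ℝ :=
  ∫ t in Ioi 0, t ^ n * exp (-(x * t) / k) * w t

section LaplaceMoment

variable {w : ℝ → ℝ} {C k : ℝ}

theorem integrableOn_laplaceMoment_integrand
    (hw : AEStronglyMeasurable w (volume.restrict (Ioi 0)))
    (hwC : ∀ᵐ t ∂volume.restrict (Ioi 0), ‖w t‖ ≤ C) (hk : 0 < k) (n : ℕ) {x : ℝ} (hx : 0 < x) :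
    IntegrableOn (fun t => t ^ n * exp (-(x * t) / k) * w t) (Ioi 0) := by
  refine Integrable.mul_bdd ?_ hw hwC
  refine (integrableOn_pow_mul_exp_neg_mul n (div_pos hx hk)).congr_fun (fun t _ => ?_)
    measurableSet_Ioi
  ring_nf

theorem hasDerivAt_laplaceMoment (hw : AEStronglyMeasurable w (volume.restrict (Ioi 0)))
    (hwC : ∀ᵐ t ∂volume.restrict (Ioi 0), ‖w t‖ ≤ C) (hk : 0 < k) (n : ℕ) {x : ℝ} (hx : 0 < x) :
    HasDerivAt (laplaceMoment w k n) (-k⁻¹ * laplaceMoment w k (n + 1) x) x := by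
  have hball : ∀ y ∈ ball x (x / 2), x / 2 < y := fun y hy => by
    linarith [(abs_lt.mp (mem_ball_iff_norm.mp hy)).1]
  have h := hasDerivAt_integral_of_dominated_loc_of_deriv_le (μ := volume.restrict (Ioi 0))
    (F := fun y t => t ^ n * exp (-(y * t) / k) * w t)
    (F' := fun y t => -k⁻¹ * (t ^ (n + 1) * exp (-(y * t) / k) * w t))
    (bound := fun t => k⁻¹ * C * (t ^ (n + 1) * exp (-(x / 2 / k) * t)))
    (ball_mem_nhds x (half_pos hx))
    (Filter.Eventually.of_forall fun y => by fun_prop)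
    (integrableOn_laplaceMoment_integrand hw hwC hk n hx)
    (by fun_prop) ?_ ((integrableOn_pow_mul_exp_neg_mul (n + 1) (by positivity)).const_mul _) ?_
  · rw [laplaceMoment, ← integral_const_mul]
    exact h.2
  · filter_upwards [hwC, ae_restrict_mem measurableSet_Ioi] with t hwt ht y hy
    have ht0 : 0 ≤ t := le_of_lt ht
    have hdecay : -(y * t) / k ≤ -(x / 2 / k) * t := by
      rw [neg_mul, neg_div, neg_le_neg_iff, div_mul_eq_mul_div, div_le_div_iff_of_pos_right hk]
      exact mul_le_mul_of_nonneg_right (hball y hy).le ht0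
    calc ‖-k⁻¹ * (t ^ (n + 1) * exp (-(y * t) / k) * w t)‖
        = k⁻¹ * (t ^ (n + 1) * exp (-(y * t) / k) * ‖w t‖) := by
          rw [norm_mul, norm_mul, norm_mul, norm_neg, norm_inv, Real.norm_of_nonneg hk.le,
            Real.norm_of_nonneg (pow_nonneg ht0 _), Real.norm_of_nonneg (exp_pos _).le]
      _ ≤ k⁻¹ * (t ^ (n + 1) * exp (-(x / 2 / k) * t) * C) := by
          gcongr
      _ = k⁻¹ * C * (t ^ (n + 1) * exp (-(x / 2 / k) * t)) := by ring
  · filter_upwards with t y _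
    have hlin : HasDerivAt (fun y => -(y * t) / k) (-t / k) y :=
      (hasDerivAt_mul_const t).neg.div_const k
    refine ((hlin.exp.const_mul (t ^ n)).mul_const (w t)).congr_deriv ?_
    ring

theorem eqOn_iteratedDeriv_laplaceMoment_zero
    (hw : AEStronglyMeasurable w (volume.restrict (Ioi 0)))
    (hwC : ∀ᵐ t ∂volume.restrict (Ioi 0), ‖w t‖ ≤ C) (hk : 0 < k) (n : ℕ) :
    EqOn (iteratedDeriv n (laplaceMoment w k 0)) (fun x => (-k⁻¹) ^ n * laplaceMoment w k n x)
      (Ioi 0) := by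
  induction n with
  | zero => intro x _; simp
  | succ n ih =>
    intro x hx
    rw [iteratedDeriv_succ, ih.deriv isOpen_Ioi hx,
      ((hasDerivAt_laplaceMoment hw hwC hk n hx).const_mul _).deriv, pow_succ]
    ring

theorem laplaceMoment_nonneg (hw : ∀ t > 0, 0 ≤ w t) (n : ℕ) (x : ℝ) :
    0 ≤ laplaceMoment w k n x :=
  setIntegral_nonneg measurableSet_Ioi fun t (ht : 0 < t) => by have := hw t ht; positivity

end LaplaceMoment

theorem pkBeta_eq_laplaceMoment (p k : ℝ) :
    pkBeta p k = fun x => p / k * laplaceMoment (fun t => (1 + exp (-t))⁻¹) k 0 x := by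
  ext x
  simp [pkBeta, laplaceMoment, div_eq_mul_inv]

theorem pkBeta_completelyMonotonic (p k : ℝ) (hp : 0 < p) (hk : 0 < k)
    (n : ℕ) (x : ℝ) (hx : 0 < x) :
    0 ≤ (-1 : ℝ) ^ n * iteratedDeriv n (pkBeta p k) x := by
  set w : ℝ → ℝ := fun t => (1 + exp (-t))⁻¹
  have hw_meas : AEStronglyMeasurable w (volume.restrict (Ioi 0)) := by fun_prop
  have hw_pos : ∀ t, 0 < w t := fun t => by positivity
  have hw_le : ∀ t, ‖w t‖ ≤ 1 := fun t => by
    rw [Real.norm_of_nonneg (hw_pos t).le]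
    exact inv_le_one_of_one_le₀ (by linarith [exp_pos (-t)])
  rw [pkBeta_eq_laplaceMoment, iteratedDeriv_const_mul_field,
    eqOn_iteratedDeriv_laplaceMoment_zero hw_meas (ae_of_all _ hw_le) hk n hx]
  have hsign : (-1 : ℝ) ^ n * (-k⁻¹) ^ n = k⁻¹ ^ n := by
    rw [← mul_pow, neg_one_mul, neg_neg]
  calc (0 : ℝ) ≤ p / k * k⁻¹ ^ n * laplaceMoment w k n x := by
        have := laplaceMoment_nonneg (k := k) (fun t _ => (hw_pos t).le) n x
        positivity
    _ = _ := by rw [← hsign]; ring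
end

section
/- For n ∈ ℕ₀, x > 0, a ≥ 1, and p, k > 0, the inequality |ₚβₖ⁽ⁿ⁾(ax)| ≤ a · |ₚβₖ⁽ⁿ⁾(x)| holds; if 0 < a ≤ 1 the inequality reverses. Here |ₚβₖ⁽ⁿ⁾(x)| = (−1)ⁿ ₚβₖ⁽ⁿ⁾(x). -/
/-!
Differentiating under the integral sign gives
`(-1)ⁿ ₚβₖ⁽ⁿ⁾(y) = (p / kⁿ⁺¹) ∫₀^∞ tⁿ e^{-yt/k} / (1 + e^{-t}) dt`, which is nonnegative and
nonincreasing in `y > 0`. Any such function `g` satisfies `g(ax) ≤ g(x) ≤ a g(x)` for `a ≥ 1`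
and `a g(x) ≤ g(x) ≤ g(ax)` for `0 < a ≤ 1`.
-/

open MeasureTheory Real

open Set

section ScaleBounds

variable {f : ℝ → ℝ} {a x : ℝ}

lemma AntitoneOn.apply_mul_le_mul_apply (hf : AntitoneOn f (Ioi 0)) (hx : 0 < x)
    (hfx : 0 ≤ f x) (ha : 1 ≤ a) : f (a * x) ≤ a * f x :=
  calc f (a * x) ≤ f x := hf hx (mul_pos (by linarith) hx) (le_mul_of_one_le_left hx.le ha)
    _ ≤ a * f x := le_mul_of_one_le_left hfx ha

lemma AntitoneOn.mul_apply_le_apply_mul (hf : AntitoneOn f (Ioi 0)) (hx : 0 < x)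
    (hfx : 0 ≤ f x) (ha₀ : 0 < a) (ha : a ≤ 1) : a * f x ≤ f (a * x) :=
  calc a * f x ≤ f x := mul_le_of_le_one_left hfx ha
    _ ≤ f (a * x) := hf (mul_pos ha₀ hx) hx (mul_le_of_le_one_left hx.le ha)

end ScaleBounds

noncomputable def pkIntegrand (k : ℝ) (n : ℕ) (y t : ℝ) : ℝ :=
  t ^ n * exp (-(y * t) / k) / (1 + exp (-t))

noncomputable def pkMoment (k : ℝ) (n : ℕ) (y : ℝ) : ℝ :=
  ∫ t in Ioi 0, pkIntegrand k n y t

section Integrand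

variable {k : ℝ} {n : ℕ} {y z t : ℝ}

lemma continuous_pkIntegrand : Continuous (pkIntegrand k n y) := by
  unfold pkIntegrand
  exact Continuous.div (by fun_prop) (by fun_prop) fun t => by positivity

lemma pkIntegrand_nonneg (ht : 0 ≤ t) : 0 ≤ pkIntegrand k n y t := by
  unfold pkIntegrand
  positivity

lemma pkIntegrand_antitone (hk : 0 < k) (ht : 0 ≤ t) (hyz : y ≤ z) :
    pkIntegrand k n z t ≤ pkIntegrand k n y t := by
  unfold pkIntegrand
  have : exp (-(z * t) / k) ≤ exp (-(y * t) / k) := by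
    rw [exp_le_exp, div_le_div_iff_of_pos_right hk]
    nlinarith
  gcongr

lemma pkIntegrand_le_pow_mul_exp (ht : 0 ≤ t) :
    pkIntegrand k n y t ≤ t ^ n * exp (-(y / k) * t) := by
  unfold pkIntegrand
  rw [show -(y / k) * t = -(y * t) / k by ring]
  exact div_le_self (by positivity) (le_add_of_nonneg_right (exp_nonneg _))

lemma integrableOn_pkIntegrand (hk : 0 < k) (hy : 0 < y) :
    IntegrableOn (pkIntegrand k n y) (Ioi 0) := by
  have hdom : IntegrableOn (fun t : ℝ => t ^ n * exp (-(y / k) * t)) (Ioi 0) := by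
    simpa only [rpow_natCast, rpow_one] using
      integrableOn_rpow_mul_exp_neg_mul_rpow (p := 1) (s := (n : ℝ)) (b := y / k)
        (by linarith [n.cast_nonneg (α := ℝ)]) one_pos (div_pos hy hk)
  refine hdom.mono' continuous_pkIntegrand.aestronglyMeasurable.restrict ?_
  filter_upwards [ae_restrict_mem measurableSet_Ioi] with t (ht : 0 < t)
  rw [norm_of_nonneg (pkIntegrand_nonneg ht.le)]
  exact pkIntegrand_le_pow_mul_exp ht.le

lemma hasDerivAt_pkIntegrand :
    HasDerivAt (fun y => pkIntegrand k n y t) (-(1 / k) * pkIntegrand k (n + 1) y t) y := by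
  have hlin : HasDerivAt (fun y : ℝ => -(y * t) / k) (-t / k) y := by
    simpa using (((hasDerivAt_id y).mul_const t).neg).div_const k
  refine ((hlin.exp.const_mul (t ^ n)).div_const (1 + exp (-t))).congr_deriv ?_
  unfold pkIntegrand
  ring

end Integrand

section Moment

variable {k : ℝ} {n : ℕ} {y : ℝ}

lemma hasDerivAt_pkMoment (hk : 0 < k) (hy : 0 < y) :
    HasDerivAt (pkMoment k n) (-(1 / k) * pkMoment k (n + 1) y) y := by
  have hball : ∀ x ∈ Metric.ball y (y / 2), y / 2 ≤ x := fun x hx => by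
    linarith [(abs_lt.mp (mem_ball_iff_norm.mp hx)).1]
  have key := hasDerivAt_integral_of_dominated_loc_of_deriv_le
    (μ := volume.restrict (Ioi 0)) (s := Metric.ball y (y / 2))
    (F := fun x t => pkIntegrand k n x t)
    (F' := fun x t => -(1 / k) * pkIntegrand k (n + 1) x t)
    (bound := fun t => 1 / k * pkIntegrand k (n + 1) (y / 2) t)
    (Metric.ball_mem_nhds y (half_pos hy))
    (.of_forall fun _ => continuous_pkIntegrand.aestronglyMeasurable.restrict)
    (integrableOn_pkIntegrand hk hy)
    (continuous_const.mul continuous_pkIntegrand).aestronglyMeasurable.restrict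
    ?_ ((integrableOn_pkIntegrand hk (half_pos hy)).const_mul _)
    (.of_forall fun _ _ _ => hasDerivAt_pkIntegrand)
  · rw [pkMoment, ← integral_const_mul]
    exact key.2
  · filter_upwards [ae_restrict_mem measurableSet_Ioi] with t (ht : 0 < t) x hx
    rw [norm_mul, norm_neg, norm_of_nonneg (by positivity),
      norm_of_nonneg (pkIntegrand_nonneg ht.le)]
    gcongr
    exact pkIntegrand_antitone hk ht.le (hball x hx)

lemma pkMoment_nonneg : 0 ≤ pkMoment k n y :=
  setIntegral_nonneg measurableSet_Ioi fun _ ht => pkIntegrand_nonneg (le_of_lt ht)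

lemma antitoneOn_pkMoment (hk : 0 < k) : AntitoneOn (pkMoment k n) (Ioi 0) :=
  fun y (hy : 0 < y) _ _ hyz =>
    setIntegral_mono_on (integrableOn_pkIntegrand hk (hy.trans_le hyz))
      (integrableOn_pkIntegrand hk hy) measurableSet_Ioi
      fun _ ht => pkIntegrand_antitone hk (le_of_lt ht) hyz

end Moment

section Derivatives

variable {p k : ℝ}

lemma iteratedDeriv_pkBeta (hk : 0 < k) (n : ℕ) {y : ℝ} (hy : 0 < y) :
    iteratedDeriv n (pkBeta p k) y = p / k * (-(1 / k)) ^ n * pkMoment k n y := by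
  induction n generalizing y with
  | zero => simp [pkBeta, pkMoment, pkIntegrand]
  | succ n ih =>
    have hev : iteratedDeriv n (pkBeta p k) =ᶠ[nhds y]
        fun z => p / k * (-(1 / k)) ^ n * pkMoment k n z :=
      Filter.eventually_of_mem (Ioi_mem_nhds hy) fun z hz => ih hz
    rw [iteratedDeriv_succ, hev.deriv_eq,
      ((hasDerivAt_pkMoment hk hy).const_mul (p / k * (-(1 / k)) ^ n)).deriv, pow_succ]
    ring

lemma neg_one_pow_mul_iteratedDeriv_pkBeta (hk : 0 < k) (n : ℕ) {y : ℝ} (hy : 0 < y) :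
    (-1 : ℝ) ^ n * iteratedDeriv n (pkBeta p k) y = p / k * (1 / k) ^ n * pkMoment k n y := by
  have hsign : (-1 : ℝ) ^ n * (-(1 / k)) ^ n = (1 / k) ^ n := by
    rw [← mul_pow, neg_one_mul, neg_neg]
  rw [iteratedDeriv_pkBeta hk n hy, ← hsign]
  ring

end Derivatives

theorem pkBeta_abs_deriv_scale (p k x a : ℝ) (hp : 0 < p) (hk : 0 < k)
    (hx : 0 < x) (ha : 0 < a) (n : ℕ) :
    (1 ≤ a →
      (-1 : ℝ) ^ n * iteratedDeriv n (pkBeta p k) (a * x) ≤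
        a * ((-1 : ℝ) ^ n * iteratedDeriv n (pkBeta p k) x)) ∧
    (a ≤ 1 →
      a * ((-1 : ℝ) ^ n * iteratedDeriv n (pkBeta p k) x) ≤
        (-1 : ℝ) ^ n * iteratedDeriv n (pkBeta p k) (a * x)) := by
  set g : ℝ → ℝ := fun y => (-1 : ℝ) ^ n * iteratedDeriv n (pkBeta p k) y
  have hg : EqOn g (fun y => p / k * (1 / k) ^ n * pkMoment k n y) (Ioi 0) :=
    fun y hy => neg_one_pow_mul_iteratedDeriv_pkBeta hk n hy
  have hC : 0 ≤ p / k * (1 / k) ^ n := by positivity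
  have hg_anti : AntitoneOn g (Ioi 0) := fun y hy z hz hyz => by
    rw [hg hy, hg hz]
    exact mul_le_mul_of_nonneg_left (antitoneOn_pkMoment hk hy hz hyz) hC
  have hgx : 0 ≤ g x := by
    rw [hg hx]
    exact mul_nonneg hC pkMoment_nonneg
  exact ⟨hg_anti.apply_mul_le_mul_apply hx hgx, hg_anti.mul_apply_le_apply_mul hx hgx ha⟩
end
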